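/- Let u : B² → ℝⁿ be a smooth map into the unit sphere Sⁿ⁻¹ (i.e. |u(x)| = 1 for all x). Then u satisfies the harmonic map equation -Δu = |∇u|² u if and only if for all indices i, j one has div(uⁱ ∇uʲ - uʲ ∇uⁱ) = 0. -/

import Mathlib

open MeasureTheory Metric Finset
noncomputable section

/-- Partial derivative in the `i`-th coordinate direction on Euclidean space. -/
def pd {d : ℕ} (i : Fin d) (f : EuclideanSpace ℝ (Fin d) → ℝ) :
    EuclideanSpace ℝ (Fin d) → ℝ :=
  fun x => fderiv ℝ f x (EuclideanSpace.single i 1)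

/-- Euclidean Laplacian. -/
def lap {d : ℕ} (f : EuclideanSpace ℝ (Fin d) → ℝ) : EuclideanSpace ℝ (Fin d) → ℝ :=
  fun x => ∑ i : Fin d, pd i (pd i f) x

/-- Divergence of a vector field given by its components. -/
def divg {d : ℕ} (v : Fin d → (EuclideanSpace ℝ (Fin d) → ℝ)) :
    EuclideanSpace ℝ (Fin d) → ℝ :=
  fun x => ∑ i : Fin d, pd i (v i) x

lemma pd_contDiff {d : ℕ} (i : Fin d) {f : EuclideanSpace ℝ (Fin d) → ℝ}
    (hf : ContDiff ℝ (⊤ : ℕ∞) f) : ContDiff ℝ (⊤ : ℕ∞) (pd i f) := by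
  have h := hf.fderiv_right (m := (⊤ : ℕ∞)) (by simp)
  exact (ContinuousLinearMap.apply ℝ ℝ (EuclideanSpace.single i 1)).contDiff.comp h

lemma pd_mul {d : ℕ} (i : Fin d) {f g : EuclideanSpace ℝ (Fin d) → ℝ}
    (hf : ContDiff ℝ (⊤ : ℕ∞) f) (hg : ContDiff ℝ (⊤ : ℕ∞) g) (x : EuclideanSpace ℝ (Fin d)) :
    pd i (fun y => f y * g y) x = pd i f x * g x + f x * pd i g x := by
  unfold pd
  rw [fderiv_fun_mul (hf.differentiable (by simp) x) (hg.differentiable (by simp) x)]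
  simp only [ContinuousLinearMap.add_apply, ContinuousLinearMap.smul_apply, smul_eq_mul]
  ring

lemma pd_sub {d : ℕ} (i : Fin d) {f g : EuclideanSpace ℝ (Fin d) → ℝ}
    (hf : ContDiff ℝ (⊤ : ℕ∞) f) (hg : ContDiff ℝ (⊤ : ℕ∞) g) (x : EuclideanSpace ℝ (Fin d)) :
    pd i (fun y => f y - g y) x = pd i f x - pd i g x := by
  unfold pd
  rw [fderiv_fun_sub (hf.differentiable (by simp) x) (hg.differentiable (by simp) x)]
  simp

lemma pd_sum {d m : ℕ} (i : Fin d) {f : Fin m → EuclideanSpace ℝ (Fin d) → ℝ}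
    (hf : ∀ j, ContDiff ℝ (⊤ : ℕ∞) (f j)) (x : EuclideanSpace ℝ (Fin d)) :
    pd i (fun y => ∑ j, f j y) x = ∑ j, pd i (f j) x := by
  unfold pd
  rw [fderiv_fun_sum (fun j _ => (hf j).differentiable (by simp) x)]
  simp

lemma pd_const {d : ℕ} (i : Fin d) (c : ℝ) (x : EuclideanSpace ℝ (Fin d)) :
    pd i (fun _ => c) x = 0 := by
  unfold pd; simp

/-- Shatah's conservation law: a smooth sphere-valued map on the unit disc is harmonic,
`-Δu = |∇u|² u`, iff `div(uⁱ∇uʲ - uʲ∇uⁱ) = 0` for all `i, j`. -/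
theorem harmonic_sphere_iff_conservation (n : ℕ)
    (u : EuclideanSpace ℝ (Fin 2) → EuclideanSpace ℝ (Fin n))
    (hu : ContDiff ℝ (⊤ : ℕ∞) u)
    (hsph : ∀ x, ‖u x‖ = 1) :
    (∀ x ∈ ball (0 : EuclideanSpace ℝ (Fin 2)) 1, ∀ i : Fin n,
      -(lap (fun y => u y i) x) =
        (∑ j : Fin n, ∑ k : Fin 2, (pd k (fun y => u y j) x) ^ 2) * u x i)
    ↔
    (∀ x ∈ ball (0 : EuclideanSpace ℝ (Fin 2)) 1, ∀ i j : Fin n,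
      divg (fun k => fun y =>
        u y i * pd k (fun z => u z j) y - u y j * pd k (fun z => u z i) y) x = 0) := by
  have hfC : ∀ i : Fin n, ContDiff ℝ (⊤ : ℕ∞) (fun y => u y i) := fun i => by
    exact (EuclideanSpace.proj (𝕜 := ℝ) i).contDiff.comp hu
  -- Key identity A: the divergence equals uⁱ Δuʲ - uʲ Δuⁱ
  have hA : ∀ (x) (i j : Fin n),
      divg (fun k => fun y =>
        u y i * pd k (fun z => u z j) y - u y j * pd k (fun z => u z i) y) x
        = u x i * lap (fun y => u y j) x - u x j * lap (fun y => u y i) x := by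
    intro x i j
    unfold divg lap
    have hterm : ∀ k : Fin 2,
        pd k (fun y => u y i * pd k (fun z => u z j) y - u y j * pd k (fun z => u z i) y) x
          = u x i * pd k (pd k (fun y => u y j)) x - u x j * pd k (pd k (fun y => u y i)) x := by
      intro k
      rw [pd_sub k ((hfC i).mul (pd_contDiff k (hfC j))) ((hfC j).mul (pd_contDiff k (hfC i))),
          pd_mul k (hfC i) (pd_contDiff k (hfC j)), pd_mul k (hfC j) (pd_contDiff k (hfC i))]
      ring
    rw [Finset.sum_congr rfl (fun k _ => hterm k), Finset.sum_sub_distrib,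
        ← Finset.mul_sum, ← Finset.mul_sum]
  -- Sum of squares of components is 1
  have hone : ∀ x, ∑ j : Fin n, u x j * u x j = 1 := by
    intro x
    have h2 : ‖u x‖ ^ 2 = 1 := by rw [hsph x]; norm_num
    rw [← real_inner_self_eq_norm_sq] at h2
    rw [PiLp.inner_apply] at h2
    simpa [RCLike.inner_apply, conj_trivial, sq] using h2
  have hone' : (fun y => ∑ j : Fin n, u y j * u y j) = (fun _ => (1:ℝ)) := funext hone
  -- First differentiation of |u|² = 1
  have hfirst : ∀ (k : Fin 2) (x), ∑ j : Fin n, u x j * pd k (fun y => u y j) x = 0 := by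
    intro k x
    have h0 : pd k (fun y => ∑ j : Fin n, u y j * u y j) x = 0 := by
      rw [hone']; exact pd_const k 1 x
    rw [pd_sum k (fun j => (hfC j).mul (hfC j))] at h0
    have hterm : ∀ j, pd k (fun y => u y j * u y j) x
        = 2 * (u x j * pd k (fun y => u y j) x) := by
      intro j; rw [pd_mul k (hfC j) (hfC j)]; ring
    rw [Finset.sum_congr rfl (fun j _ => hterm j), ← Finset.mul_sum] at h0
    linarith
  have hfirst' : ∀ k : Fin 2,
      (fun x => ∑ j : Fin n, u x j * pd k (fun y => u y j) x) = (fun _ => (0:ℝ)) :=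
    fun k => funext (hfirst k)
  -- Second differentiation
  have hsecond : ∀ (k : Fin 2) (x),
      ∑ j : Fin n, ((pd k (fun y => u y j) x) ^ 2
        + u x j * pd k (pd k (fun y => u y j)) x) = 0 := by
    intro k x
    have h0 : pd k (fun y => ∑ j : Fin n, u y j * pd k (fun z => u z j) y) x = 0 := by
      rw [hfirst' k]; exact pd_const k 0 x
    rw [pd_sum k (fun j => (hfC j).mul (pd_contDiff k (hfC j)))] at h0
    have hterm : ∀ j, pd k (fun y => u y j * pd k (fun z => u z j) y) x
        = (pd k (fun y => u y j) x) ^ 2 + u x j * pd k (pd k (fun y => u y j)) x := by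
      intro j; rw [pd_mul k (hfC j) (pd_contDiff k (hfC j))]; ring
    rw [Finset.sum_congr rfl (fun j _ => hterm j)] at h0
    exact h0
  -- Key identity B: ∑ⱼ uʲ Δuʲ = -|∇u|²
  have hB : ∀ x, ∑ j : Fin n, u x j * lap (fun y => u y j) x
      = - ∑ j : Fin n, ∑ k : Fin 2, (pd k (fun y => u y j) x) ^ 2 := by
    intro x
    have hsum : ∑ k : Fin 2, ∑ j : Fin n, ((pd k (fun y => u y j) x) ^ 2
        + u x j * pd k (pd k (fun y => u y j)) x) = 0 :=
      Finset.sum_eq_zero (fun k _ => hsecond k x)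
    rw [Finset.sum_comm] at hsum
    simp only [Finset.sum_add_distrib, ← Finset.mul_sum] at hsum
    unfold lap
    linarith
  constructor
  · intro h x hx i j
    rw [hA x i j]
    have hi := h x hx i
    have hj := h x hx j
    set e := ∑ j : Fin n, ∑ k : Fin 2, (pd k (fun y => u y j) x) ^ 2 with he
    have hi' : lap (fun y => u y i) x = -(e * u x i) := by linarith
    have hj' : lap (fun y => u y j) x = -(e * u x j) := by linarith
    rw [hi', hj']; ring
  · intro h x hx i
    have hc : ∀ j, u x i * lap (fun y => u y j) x = u x j * lap (fun y => u y i) x := by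
      intro j
      have hji := h x hx i j
      rw [hA x i j] at hji
      linarith
    have h1 : lap (fun y => u y i) x
        = (∑ j : Fin n, u x j * u x j) * lap (fun y => u y i) x := by
      rw [hone x, one_mul]
    rw [Finset.sum_mul] at h1
    have h2 : ∀ j, u x j * u x j * lap (fun y => u y i) x
        = u x j * (u x i * lap (fun y => u y j) x) := by
      intro j; rw [hc j]; ring
    rw [Finset.sum_congr rfl (fun j _ => h2 j)] at h1
    have h3 : ∑ j : Fin n, u x j * (u x i * lap (fun y => u y j) x)
        = u x i * ∑ j : Fin n, u x j * lap (fun y => u y j) x := by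
      rw [Finset.mul_sum]; exact Finset.sum_congr rfl (fun j _ => by ring)
    rw [h3, hB x] at h1
    nlinarith [h1]
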